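/- Let r, s ≥ 1 be integers and t = min(r, s). Let M be an r×s matrix with entries in {−1, 0, 1} and u ∈ {−1, 0, 1}^r. Let p be a prime and F a field of characteristic p, and view the entries of M and u as elements of F via the canonical ring map from ℤ. If the linear system M·x = u has a solution x ∈ F^s, then there exist integers a_1, …, a_s and b with |a_i| ≤ t! for every i ∈ [s], |b| ≤ t!, and p does not divide b, such that the vector x ∈ 𝔽_p^s given by x_i = (a_i mod p)·(b mod p)^{−1} satisfies M·x = u over the prime field 𝔽_p. -/

import Mathlib

/-!
A solution over `F` descends to `𝔽_p` through an `𝔽_p`-linear retraction `F → 𝔽_p`. Over `𝔽_p`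
the right-hand side lies in the span of a linearly independent set `I` of columns, and some set
`R` of `|I|` rows makes `B = M[R, I]` nonsingular mod `p`; the solution supported on `I` is then
forced by `B`, so Cramer's rule writes it as `cramer(B, u_R) / det B`. These are determinants of
`{-1, 0, 1}` integer matrices of size `|I| ≤ min r s`, bounded by `|I|!` through the Leibniz
expansion, and `p ∤ det B` because `B` is invertible mod `p`.
-/

open Matrix Function

theorem exists_fin_linearIndependent_subfamily {K V ι : Type*} [DivisionRing K] [AddCommGroup V]
    [Module K V] [Finite ι] (v : ι → V) :
    ∃ (k : ℕ) (g : Fin k ↪ ι), LinearIndependent K (v ∘ g) ∧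
      Submodule.span K (Set.range (v ∘ g)) = Submodule.span K (Set.range v) := by
  obtain ⟨κ, a, ha, hspan, hli⟩ := exists_linearIndependent' K v
  have : Finite κ := Finite.of_injective a ha
  let e := Finite.equivFin κ
  refine ⟨_, e.symm.toEmbedding.trans ⟨a, ha⟩, hli.comp _ e.symm.injective, ?_⟩
  rw [← hspan]
  congr 1
  exact e.symm.surjective.range_comp (v ∘ a)

theorem mulVec_eq_submatrix_mulVec_comp_of_support {R m n κ : Type*} [Fintype n] [Fintype κ]
    [NonUnitalNonAssocSemiring R] (A : Matrix m n R) {g : κ → n} (hg : Injective g)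
    {x : n → R} (hx : ∀ j ∉ Set.range g, x j = 0) :
    A *ᵥ x = A.submatrix id g *ᵥ (x ∘ g) := by
  ext i
  exact (Fintype.sum_of_injective g hg _ _ (fun j hj => by simp [hx j hj]) fun l => rfl).symm

section Field

variable {K : Type*} [Field K] {m n : Type*}

theorem exists_linearIndependent_cols_mulVec_eq [Fintype n] {A : Matrix m n K} {b : m → K}
    (hb : ∃ x, A *ᵥ x = b) :
    ∃ (k : ℕ) (g : Fin k ↪ n) (y : Fin k → K),
      LinearIndependent K (A.submatrix id g).col ∧ A.submatrix id g *ᵥ y = b := by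
  obtain ⟨k, g, hli, hspan⟩ := exists_fin_linearIndependent_subfamily (K := K) A.col
  obtain ⟨x, rfl⟩ := hb
  have hmem : A *ᵥ x ∈ LinearMap.range (A.submatrix id g).mulVecLin := by
    rw [range_mulVecLin]
    change _ ∈ Submodule.span K (Set.range (A.col ∘ g))
    rw [hspan, ← range_mulVecLin]
    exact ⟨x, rfl⟩
  obtain ⟨y, hy⟩ := hmem
  exact ⟨k, g, y, hli, hy⟩

theorem exists_det_submatrix_ne_zero_of_linearIndependent_cols [Fintype m] {k : ℕ}
    {N : Matrix m (Fin k) K} (hN : LinearIndependent K N.col) :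
    ∃ f : Fin k ↪ m, (N.submatrix f id).det ≠ 0 := by
  obtain ⟨k', f, hli, hspan⟩ := exists_fin_linearIndependent_subfamily (K := K) N.row
  have hrank : k' = k := by
    have hk' := linearIndependent_iff_card_eq_finrank_span.mp hli
    have hk : N.rank = k := by
      simpa [rank_transpose] using LinearIndependent.rank_matrix (M := Nᵀ) hN
    rwa [Set.finrank, hspan, ← rank_eq_finrank_span_row, hk, Fintype.card_fin] at hk'
  subst hrank
  exact ⟨f, ((isUnit_iff_isUnit_det _).mp (linearIndependent_rows_iff_isUnit.mp hli)).ne_zero⟩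

theorem exists_det_submatrix_ne_zero_of_mulVec_eq [Fintype m] [Fintype n] {A : Matrix m n K}
    {b : m → K} (hb : ∃ x, A *ᵥ x = b) :
    ∃ (k : ℕ) (f : Fin k ↪ m) (g : Fin k ↪ n), (A.submatrix f g).det ≠ 0 ∧
      ∀ x : n → K, (∀ j ∉ Set.range g, x j = 0) → A.submatrix f g *ᵥ (x ∘ g) = b ∘ f →
        A *ᵥ x = b := by
  obtain ⟨k, g, y, hli, hy⟩ := exists_linearIndependent_cols_mulVec_eq hb
  obtain ⟨f, hdet⟩ := exists_det_submatrix_ne_zero_of_linearIndependent_cols hli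
  refine ⟨k, f, g, hdet, fun x hx hxf => ?_⟩
  have hxy : x ∘ g = y := by
    refine mulVec_injective_of_det_ne_zero hdet (hxf.trans ?_)
    rw [← hy]
    rfl
  rw [mulVec_eq_submatrix_mulVec_comp_of_support A g.injective hx, hxy, hy]

end Field

theorem exists_mulVec_eq_of_exists_map_mulVec_eq {K L m n : Type*} [Field K] [Ring L]
    [Nontrivial L] [Algebra K L] [Fintype n] {A : Matrix m n K} {b : m → K}
    (h : ∃ x : n → L, A.map (algebraMap K L) *ᵥ x = algebraMap K L ∘ b) :
    ∃ x, A *ᵥ x = b := by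
  obtain ⟨x, hx⟩ := h
  obtain ⟨π, hπ⟩ := (Algebra.linearMap K L).exists_leftInverse_of_injective
    (LinearMap.ker_eq_bot.mpr (FaithfulSMul.algebraMap_injective K L))
  refine ⟨π ∘ x, funext fun i => ?_⟩
  have hπ' (c : K) : π (algebraMap K L c) = c := LinearMap.congr_fun hπ c
  have := congrArg π (congrFun hx i)
  simpa [mulVec, dotProduct, ← Algebra.smul_def, map_sum, hπ'] using this

theorem abs_det_le_factorial {R n : Type*} [CommRing R] [LinearOrder R] [IsStrictOrderedRing R]
    [Fintype n] [DecidableEq n] {A : Matrix n n R} (hA : ∀ i j, |A i j| ≤ 1) :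
    |A.det| ≤ (Fintype.card n).factorial := by
  simpa using det_le (abv := AbsoluteValue.abs) hA

theorem abs_extend_zero_le {α β R : Type*} [AddCommGroup R] [LinearOrder R]
    [IsOrderedAddMonoid R] {g : α → β} {a : α → R} {c : R} (hc : 0 ≤ c) (ha : ∀ l, |a l| ≤ c)
    (j : β) : |extend g a 0 j| ≤ c := by
  classical
  rw [extend_def]
  split_ifs
  exacts [ha _, by simpa using hc]

theorem abs_le_one_of_mem_neg_one_zero_one {z : ℤ} (hz : z ∈ ({-1, 0, 1} : Set ℤ)) : |z| ≤ 1 := by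
  rcases hz with rfl | rfl | rfl <;> norm_num

theorem abs_cramer_le_factorial {R n : Type*} [CommRing R] [LinearOrder R]
    [IsStrictOrderedRing R] [Fintype n] [DecidableEq n] {A : Matrix n n R} {b : n → R}
    (hA : ∀ i j, |A i j| ≤ 1) (hb : ∀ i, |b i| ≤ 1) (j : n) :
    |cramer A b j| ≤ (Fintype.card n).factorial := by
  rw [cramer_apply]
  refine abs_det_le_factorial fun i l => ?_
  rw [updateCol_apply]
  split_ifs
  exacts [hb i, hA i l]

theorem map_mulVec_cramer_mul_inv_det {R K n : Type*} [CommRing R] [Field K] [Fintype n]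
    [DecidableEq n] (φ : R →+* K) (B : Matrix n n R) (v : n → R) (hB : φ B.det ≠ 0) :
    B.map φ *ᵥ (fun l => φ (cramer B v l) * (φ B.det)⁻¹) = φ ∘ v := by
  funext i
  have h := RingHom.map_mulVec φ B (cramer B v) i
  rw [mulVec_cramer, Pi.smul_apply, smul_eq_mul, map_mul] at h
  have hscale : (fun l => φ (cramer B v l) * (φ B.det)⁻¹) = (φ B.det)⁻¹ • (φ ∘ cramer B v) := by
    funext l
    simp [mul_comm]
  rw [hscale, mulVec_smul, Pi.smul_apply, smul_eq_mul, ← h, ← mul_assoc, inv_mul_cancel₀ hB,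
    one_mul, Function.comp_apply]

theorem stmt1_general (r s : ℕ)
    (M : Matrix (Fin r) (Fin s) ℤ) (u : Fin r → ℤ)
    (hM : ∀ i j, M i j ∈ ({-1, 0, 1} : Set ℤ))
    (hu : ∀ i, u i ∈ ({-1, 0, 1} : Set ℤ))
    (p : ℕ) [hp : Fact p.Prime]
    (F : Type*) [Field F] [CharP F p]
    (hsol : ∃ x : Fin s → F, ∀ i, ∑ j, (M i j : F) * x j = (u i : F)) :
    ∃ (a : Fin s → ℤ) (b : ℤ), (∀ j, |a j| ≤ ((min r s).factorial : ℤ)) ∧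
      |b| ≤ ((min r s).factorial : ℤ) ∧ ¬ (p : ℤ) ∣ b ∧
      ∀ i, ∑ j, (M i j : ZMod p) * ((a j : ZMod p) * ((b : ZMod p))⁻¹) = (u i : ZMod p) := by
  let _ := ZMod.algebra F p
  let φ := Int.castRingHom (ZMod p)
  have hsolp : ∃ x, M.map φ *ᵥ x = φ ∘ u := by
    refine exists_mulVec_eq_of_exists_map_mulVec_eq (L := F) ?_
    obtain ⟨x, hx⟩ := hsol
    exact ⟨x, funext fun i => by simpa [mulVec, dotProduct, φ] using hx i⟩
  obtain ⟨k, f, g, hdet, hsolve⟩ := exists_det_submatrix_ne_zero_of_mulVec_eq hsolp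
  set B := M.submatrix f g
  have hBdet : φ B.det ≠ 0 := by rwa [RingHom.map_det]
  have hk : ((Fintype.card (Fin k)).factorial : ℤ) ≤ (min r s).factorial := by
    refine Nat.cast_le.mpr (Nat.factorial_le (le_min ?_ ?_))
    exacts [by simpa using Fintype.card_le_of_embedding f,
      by simpa using Fintype.card_le_of_embedding g]
  have hM' i j := abs_le_one_of_mem_neg_one_zero_one (hM i j)
  have hu' i := abs_le_one_of_mem_neg_one_zero_one (hu i)
  refine ⟨extend g (cramer B (u ∘ f)) 0, B.det,
    abs_extend_zero_le (by positivity) fun l => (abs_cramer_le_factorial (fun _ _ => hM' _ _)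
      (fun _ => hu' _) l).trans hk,
    (abs_det_le_factorial fun _ _ => hM' _ _).trans hk,
    by rwa [← ZMod.intCast_zmod_eq_zero_iff_dvd], fun i => congrFun (hsolve _ ?_ ?_) i⟩
  · intro j hj
    simp [extend_apply' _ _ _ hj]
  · have hxg : (fun j => ((extend g (cramer B (u ∘ f)) 0 j : ℤ) : ZMod p) *
        (B.det : ZMod p)⁻¹) ∘ g = fun l => φ (cramer B (u ∘ f) l) * (φ B.det)⁻¹ :=
      funext fun l => by simp [φ, g.injective.extend_apply]
    rw [hxg]
    exact map_mulVec_cramer_mul_inv_det φ B (u ∘ f) hBdet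

/-- Lemma on small solutions of {-1,0,1} linear systems, characteristic `p` case.
If a linear system `M·x = u` with entries in `{-1,0,1}` has a solution over a field `F` of prime
characteristic `p`, then it has a solution over the prime field `𝔽_p = ZMod p` of the form
`x_i = (a_i mod p) · (b mod p)⁻¹` with `|a_i|, |b| ≤ t!`, `p ∤ b`, where `t = min r s`. -/
theorem stmt1 (r s : ℕ) (hr : 1 ≤ r) (hs : 1 ≤ s)
    (M : Matrix (Fin r) (Fin s) ℤ) (u : Fin r → ℤ)
    (hM : ∀ i j, M i j ∈ ({-1, 0, 1} : Set ℤ))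
    (hu : ∀ i, u i ∈ ({-1, 0, 1} : Set ℤ))
    (p : ℕ) [hp : Fact p.Prime]
    (F : Type*) [Field F] [CharP F p]
    (hsol : ∃ x : Fin s → F, ∀ i, ∑ j, (M i j : F) * x j = (u i : F)) :
    ∃ (a : Fin s → ℤ) (b : ℤ), (∀ j, |a j| ≤ ((min r s).factorial : ℤ)) ∧
      |b| ≤ ((min r s).factorial : ℤ) ∧ ¬ (p : ℤ) ∣ b ∧
      ∀ i, ∑ j, (M i j : ZMod p) * ((a j : ZMod p) * ((b : ZMod p))⁻¹) = (u i : ZMod p) :=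
  stmt1_general r s M u hM hu p (hp := hp) F hsol
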